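/- Let R = ∏_{i ∈ I} R_i be a product of connected commutative unital rings. For every first-order ring formula θ(x₀,…,xₙ,w) and all f₀,…,fₙ ∈ R there exists g ∈ R such that ⟦∃w θ(f̄,w)⟧ ≤ ⟦θ(f̄,g)⟧ in the Boolean algebra of idempotents, where ⟦·⟧ denotes Boolean values as determined coordinatewise by satisfaction in the factors R_i. -/

import Mathlib

open FirstOrder

noncomputable local instance (S : Type*) [CommRing S] : FirstOrder.Ring.CompatibleRing S :=
  FirstOrder.Ring.compatibleRingOfRing S

theorem exists_pi_forall_exists_imp {I : Type*} {α : I → Type*} [∀ i, Nonempty (α i)]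
    (P : ∀ i, α i → Prop) : ∃ g : ∀ i, α i, ∀ i, (∃ w, P i w) → P i (g i) :=
  ⟨fun i => Classical.epsilon (P i), fun _ h => Classical.epsilon_spec h⟩

theorem pi_ite_one_zero_mul_of_imp {I : Type*} {M : I → Type*} [∀ i, MulZeroOneClass (M i)]
    (p q : I → Prop) [DecidablePred p] [DecidablePred q] (hpq : ∀ i, p i → q i) :
    ((fun i => if p i then 1 else 0 : ∀ i, M i) * fun i => if q i then 1 else 0) =
      fun i => if p i then 1 else 0 := by
  funext i
  by_cases hp : p i
  · simp [hp, hpq i hp]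
  · simp [hp]

open Classical in
theorem prod_axiom3_general (I : Type*) (R : I → Type*) [∀ i, CommRing (R i)]
    {n : ℕ} (θ : Language.ring.Formula (Fin (n + 1))) (f : Fin n → ∀ i, R i)
    (J₁ : ∀ i, R i)
    (hJ₁ : ∀ i, J₁ i =
      if ∃ w : R i, θ.Realize (Fin.snoc (fun k => f k i) w) then (1 : R i) else 0) :
    ∃ (g : ∀ i, R i) (J₂ : ∀ i, R i),
      (∀ i, J₂ i =
        if θ.Realize (Fin.snoc (fun k => f k i) (g i)) then (1 : R i) else 0) ∧
      J₁ * J₂ = J₁ := by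
  obtain ⟨g, hg⟩ :=
    exists_pi_forall_exists_imp fun i (w : R i) => θ.Realize (Fin.snoc (fun k => f k i) w)
  refine ⟨g, _, fun _ => rfl, ?_⟩
  rw [funext hJ₁]
  exact pi_ite_one_zero_mul_of_imp _ _ hg

open Classical in
/-- Let `R = ∏ i, R i` be a product of connected commutative unital rings.  For every ring
formula `θ(x₀,…,xₙ,w)` and tuple `f̄` from `R` there exists `g ∈ R` with
`⟦∃w θ(f̄,w)⟧ ≤ ⟦θ(f̄,g)⟧` in the Boolean algebra of idempotents (where `e ≤ f` iff `ef = e`,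
and Boolean values are determined coordinatewise by satisfaction in the factors `R i`). -/
theorem prod_axiom3 (I : Type*) (R : I → Type*) [∀ i, CommRing (R i)]
    (hconn : ∀ i, (0 : R i) ≠ 1 ∧ ∀ x : R i, x * x = x → x = 0 ∨ x = 1)
    {n : ℕ} (θ : Language.ring.Formula (Fin (n + 1))) (f : Fin n → ∀ i, R i)
    (J₁ : ∀ i, R i)
    (hJ₁ : ∀ i, J₁ i =
      if ∃ w : R i, θ.Realize (Fin.snoc (fun k => f k i) w) then (1 : R i) else 0) :
    ∃ (g : ∀ i, R i) (J₂ : ∀ i, R i),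
      (∀ i, J₂ i =
        if θ.Realize (Fin.snoc (fun k => f k i) (g i)) then (1 : R i) else 0) ∧
      J₁ * J₂ = J₁ :=
  prod_axiom3_general I R θ f J₁ hJ₁
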